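/- arXiv:2605.14342 — 2 statements merged into one kernel-verified Lean document; each statement's English description precedes it below -/
import Mathlib

section
/- For all integers n ≥ 0 and k ≥ 1, C(n+k, k)_F equals the determinant of the k×k matrix B (rows and columns indexed 1,…,k) defined by B(i,j) = (−1)^{(i−j+1)(i−j)/2} C(n+1, i−j+1)_F for i ≥ j, B(i, i+1) = 1, and B(i,j) = 0 for j > i+1. -/
/-- The Fibonomial coefficient `C(n,k)_F = ∏_{r=1}^{k} F_{n-r+1}/F_r`, as a real number.
It equals `0` when `k > n` and `1` when `k = 0`. -/
noncomputable def fibonomial (n k : ℕ) : ℝ :=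
  ∏ r ∈ Finset.range k, (Nat.fib (n - r) : ℝ) / (Nat.fib (r + 1) : ℝ)

/-!
With `φ, ψ` the roots of `x² = x + 1`, Binet's formula makes the Fibonomials the
`(φ, ψ)`-analogue of the binomial coefficients: they obey the Pascal rule
`C(N+1, k+1) = φ^(k+1) C(N, k+1) + ψ^(N-k) C(N, k)`. Consequently the generating
functions `∑ₘ (φψ)^(m choose 2) C(n+1, m) Xᵐ = ∏_{i ≤ n} (1 + φ^(n-i) ψ^i X)` and
`∑ₜ (-1)ᵗ C(n+t, t) Xᵗ` are inverse to each other, and `φψ = -1` gives the sign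
`(-1)^(m choose 2)` of the matrix. A lower Hessenberg Toeplitz determinant with unit
superdiagonal and entries `c₁, c₂, …` is the `k`-th coefficient of `1 / ∑ₘ cₘ (-X)ᵐ`:
adding `∑ₗ (-1)ˡ dₗ` times column `l` to column `0` clears that column except for its
last entry, and the remaining minor is unitriangular.
-/

open Finset PowerSeries
open Real goldenRatio

variable {R : Type*} [CommRing R]

theorem coeff_succ_one_add_C_mul_X_mul (β : R) (f : R⟦X⟧) (t : ℕ) :
    coeff (t + 1) ((1 + C β * X) * f) = coeff (t + 1) f + β * coeff t f := by
  rw [add_mul, one_mul, mul_assoc, map_add, coeff_C_mul, coeff_succ_X_mul]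

theorem sum_range_ite_le {M : Type*} [AddCommMonoid M] (g : ℕ → M) {m N : ℕ} (h : m < N) :
    ∑ l ∈ range N, (if l ≤ m then g l else 0) = ∑ l ∈ range (m + 1), g l := by
  rw [← sum_filter]
  congr 1
  ext l
  simp only [mem_filter, mem_range]
  omega

def toeplitzHessenberg (c : ℕ → R) (k : ℕ) : Matrix (Fin k) (Fin k) R :=
  Matrix.of fun i j => if (j : ℕ) ≤ i + 1 then c (i + 1 - j) else 0

theorem det_toeplitzHessenberg_submatrix_castSucc_succ {c : ℕ → R} (hc : c 0 = 1) (k : ℕ) :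
    ((toeplitzHessenberg c (k + 1)).submatrix Fin.castSucc Fin.succ).det = 1 := by
  rw [Matrix.det_of_isLowerTriangular _ fun i j hij => ?_]
  · simp [toeplitzHessenberg, hc]
  · have : (i : ℕ) < j := hij
    simp only [toeplitzHessenberg, Matrix.submatrix_apply, Matrix.of_apply, Fin.val_castSucc,
      Fin.val_succ]
    rw [if_neg (by omega)]

theorem sum_range_mul_eq_ite_of_mk_mul_mk_eq_one {c d : ℕ → R} (hcd : mk c * mk d = 1) (s : ℕ) :
    ∑ l ∈ range (s + 1), c (s - l) * d l = if s = 0 then 1 else 0 := by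
  have := congrArg (coeff s) hcd
  rw [coeff_mul, ← Nat.sum_antidiagonal_swap] at this
  simpa [Nat.sum_antidiagonal_eq_sum_range_succ_mk, coeff_one] using this

theorem sum_smul_toeplitzHessenberg {c d : ℕ → R} (hc : c 0 = 1)
    (hcd : mk c * mk (fun m => (-1) ^ m * d m) = 1) (k : ℕ) (i : Fin (k + 1)) :
    ∑ l : Fin (k + 1), ((-1) ^ (l : ℕ) * d l) • toeplitzHessenberg c (k + 1) i l =
      if i = Fin.last k then -((-1) ^ (k + 1) * d (k + 1)) else 0 := by
  have hfull := sum_range_mul_eq_ite_of_mk_mul_mk_eq_one hcd (i + 1)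
  rw [if_neg i.val.succ_ne_zero, ← sum_range_ite_le _ (by omega : (i : ℕ) + 1 < k + 2),
    sum_range_succ] at hfull
  simp only [toeplitzHessenberg, Matrix.of_apply]
  rw [Fin.sum_univ_eq_sum_range (fun l => ((-1) ^ l * d l) •
    if l ≤ (i : ℕ) + 1 then c (i + 1 - l) else 0)]
  simp only [smul_eq_mul, mul_comm ((-1) ^ _ * d _), ite_mul, zero_mul]
  rcases eq_or_ne i (Fin.last k) with rfl | hi
  · simp only [Fin.val_last, le_refl, if_true, Nat.sub_self, hc, one_mul] at hfull ⊢
    exact eq_neg_of_add_eq_zero_left hfull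
  · have hik : (i : ℕ) < k := Fin.val_lt_last hi
    rw [if_neg hi]
    rwa [if_neg (by omega), add_zero] at hfull

theorem det_toeplitzHessenberg {c d : ℕ → R} (hc : c 0 = 1)
    (hcd : mk c * mk (fun m => (-1) ^ m * d m) = 1) (k : ℕ) :
    (toeplitzHessenberg c k).det = d k := by
  have hd : d 0 = 1 := by simpa [hc] using sum_range_mul_eq_ite_of_mk_mul_mk_eq_one hcd 0
  obtain _ | k := k
  · simp [hd]
  set B := toeplitzHessenberg c (k + 1)
  have hminor (v : Fin (k + 1) → R) :
      ((B.updateCol 0 v).submatrix Fin.castSucc Fin.succ).det = 1 := by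
    have hsub : (B.updateCol 0 v).submatrix Fin.castSucc Fin.succ =
        B.submatrix Fin.castSucc Fin.succ := by
      ext i j
      simp [Fin.succ_ne_zero]
    rw [hsub, det_toeplitzHessenberg_submatrix_castSucc_succ hc]
  calc B.det
      = (B.updateCol 0 fun i => ∑ l : Fin (k + 1), ((-1) ^ (l : ℕ) * d l) • B i l).det := by
        rw [Matrix.det_updateCol_sum]
        simp [hd]
    _ = d (k + 1) := by
        simp only [sum_smul_toeplitzHessenberg hc hcd, B]
        rw [Matrix.det_succ_column_zero, Fintype.sum_eq_single (Fin.last k) fun i hi => by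
          rw [Matrix.updateCol_self, if_neg hi, mul_zero, zero_mul]]
        rw [Matrix.updateCol_self, if_pos rfl, Fin.succAbove_last, hminor, Fin.val_last, mul_one,
          pow_succ, mul_neg_one, neg_mul, neg_neg, ← mul_assoc, ← pow_add,
          Even.neg_one_pow ⟨k, rfl⟩, one_mul]

section Lucasnomial

variable (a b : R)

/-- The `(a, b)`-binomial coefficients; with `a = b = 1` these are `Nat.choose`, and with
`a = φ, b = ψ` the Fibonomials. -/
def lucasnomial : ℕ → ℕ → R
  | _, 0 => 1
  | 0, _ + 1 => 0
  | N + 1, k + 1 => a ^ (k + 1) * lucasnomial N (k + 1) + b ^ (N - k) * lucasnomial N k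

@[simp]
theorem lucasnomial_zero_right (N : ℕ) : lucasnomial a b N 0 = 1 := by
  cases N <;> rfl

theorem lucasnomial_succ_succ (N k : ℕ) : lucasnomial a b (N + 1) (k + 1) =
    a ^ (k + 1) * lucasnomial a b N (k + 1) + b ^ (N - k) * lucasnomial a b N k :=
  rfl

theorem lucasnomial_eq_zero_of_lt {N k : ℕ} (h : N < k) : lucasnomial a b N k = 0 := by
  induction N generalizing k with
  | zero =>
    obtain ⟨k, rfl⟩ := Nat.exists_eq_add_one_of_ne_zero h.ne'
    rfl
  | succ N ih =>
    obtain ⟨k, rfl⟩ := Nat.exists_eq_add_one_of_ne_zero (Nat.ne_zero_of_lt h)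
    rw [lucasnomial_succ_succ, ih (by omega), ih (by omega), mul_zero, mul_zero, add_zero]

/-- `∏_{i<n} (1 + a^(n-1-i) b^i X)`, by `lucasProd_zero` and `lucasProd_succ`. -/
noncomputable def lucasProd (n : ℕ) : R⟦X⟧ :=
  mk fun m => (a * b) ^ m.choose 2 * lucasnomial a b n m

noncomputable def lucasSeries (n : ℕ) : R⟦X⟧ :=
  mk fun t => (-1) ^ t * lucasnomial a b (n + t) t

theorem lucasProd_zero : lucasProd a b 0 = 1 := by
  ext (_ | m)
  · simp [lucasProd]
  · simp [lucasProd, lucasnomial_eq_zero_of_lt a b m.succ_pos]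

theorem lucasProd_succ (n : ℕ) :
    lucasProd a b (n + 1) = (1 + C (b ^ n) * X) * rescale a (lucasProd a b n) := by
  ext (_ | m)
  · simp [lucasProd, rescale_mk]
  · rw [coeff_succ_one_add_C_mul_X_mul]
    simp only [lucasProd, coeff_rescale, coeff_mk, lucasnomial_succ_succ, Nat.choose_succ_succ',
      Nat.choose_one_right]
    rcases le_or_gt m n with h | h
    · obtain ⟨r, rfl⟩ := Nat.exists_eq_add_of_le h
      rw [Nat.add_sub_cancel_left]
      ring
    · rw [lucasnomial_eq_zero_of_lt a b h]
      ring

theorem coeff_succ_one_add_mul_lucasSeries (n t : ℕ) :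
    coeff (t + 1) ((1 + C (b ^ n) * X) * lucasSeries a b n) =
      (-1) ^ (t + 1) * a ^ (t + 1) * lucasnomial a b (n + t) (t + 1) := by
  rw [coeff_succ_one_add_C_mul_X_mul]
  simp only [lucasSeries, coeff_mk, ← add_assoc, lucasnomial_succ_succ, Nat.add_sub_cancel]
  ring

theorem one_add_X_mul_lucasSeries_zero : (1 + X) * lucasSeries a b 0 = 1 := by
  ext (_ | t)
  · simp [lucasSeries]
  · have := coeff_succ_one_add_mul_lucasSeries a b 0 t
    rw [pow_zero, map_one, one_mul, lucasnomial_eq_zero_of_lt a b (by omega)] at this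
    simpa using this

theorem one_add_X_mul_lucasSeries_succ (n : ℕ) :
    (1 + C (b ^ (n + 1)) * X) * lucasSeries a b (n + 1) = rescale a (lucasSeries a b n) := by
  ext (_ | t)
  · simp [lucasSeries]
  · rw [coeff_succ_one_add_mul_lucasSeries, coeff_rescale]
    simp only [lucasSeries, coeff_mk]
    rw [show n + 1 + t = n + (t + 1) by omega]
    ring

theorem lucasProd_succ_mul_lucasSeries (n : ℕ) :
    lucasProd a b (n + 1) * lucasSeries a b n = 1 := by
  induction n with
  | zero =>
    rw [lucasProd_succ, lucasProd_zero, map_one, mul_one, pow_zero, map_one, one_mul,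
      one_add_X_mul_lucasSeries_zero]
  | succ n ih =>
    rw [lucasProd_succ, mul_comm (1 + _), mul_assoc, one_add_X_mul_lucasSeries_succ, ← map_mul,
      ih, map_one]

end Lucasnomial

theorem coe_fib_add (m n : ℕ) :
    (Nat.fib (m + n) : ℝ) = φ ^ m * Nat.fib n + ψ ^ n * Nat.fib m := by
  simp only [coe_fib_eq]
  ring

theorem fibonomial_eq_div (N k : ℕ) : fibonomial N k =
    (∏ r ∈ range k, (Nat.fib (N - r) : ℝ)) / ∏ r ∈ range k, (Nat.fib (r + 1) : ℝ) :=
  prod_div_distrib ..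

theorem fibonomial_succ_succ (N k : ℕ) : fibonomial (N + 1) (k + 1) =
    φ ^ (k + 1) * fibonomial N (k + 1) + ψ ^ (N - k) * fibonomial N k := by
  have hden : ∏ r ∈ range k, (Nat.fib (r + 1) : ℝ) ≠ 0 :=
    prod_ne_zero_iff.2 fun r _ => Nat.cast_ne_zero.2 (Nat.fib_pos.2 r.succ_pos).ne'
  have hk : (Nat.fib (k + 1) : ℝ) ≠ 0 := Nat.cast_ne_zero.2 (Nat.fib_pos.2 k.succ_pos).ne'
  simp only [fibonomial_eq_div, prod_range_succ' (fun r => (Nat.fib (N + 1 - r) : ℝ)),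
    prod_range_succ (fun r => (Nat.fib (r + 1) : ℝ)),
    prod_range_succ (fun r => (Nat.fib (N - r) : ℝ)), Nat.add_sub_add_right, Nat.sub_zero]
  field_simp
  rcases le_or_gt k N with h | h
  · obtain ⟨r, rfl⟩ := Nat.exists_eq_add_of_le h
    rw [Nat.add_sub_cancel_left, show k + r + 1 = (k + 1) + r by omega, coe_fib_add]
    ring
  · rw [prod_eq_zero (mem_range.2 h) (by simp)]
    ring

theorem fibonomial_eq_lucasnomial (N k : ℕ) : fibonomial N k = lucasnomial φ ψ N k := by
  induction N generalizing k with
  | zero =>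
    cases k with
    | zero => simp [fibonomial]
    | succ k => simp [fibonomial, lucasnomial]
  | succ N ih =>
    cases k with
    | zero => simp [fibonomial]
    | succ k => rw [fibonomial_succ_succ, lucasnomial_succ_succ, ih, ih]

theorem fibonomial_det_hessenberg_column_general (n k : ℕ) :
    fibonomial (n + k) k =
      Matrix.det (Matrix.of fun i j : Fin k =>
        if (j : ℕ) = (i : ℕ) + 1 then (1 : ℝ)
        else if (j : ℕ) ≤ (i : ℕ) then
          (-1 : ℝ) ^ ((((i : ℕ) - (j : ℕ)) + 1) * ((i : ℕ) - (j : ℕ)) / 2) *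
            fibonomial (n + 1) (((i : ℕ) - (j : ℕ)) + 1)
        else 0) := by
  set c : ℕ → ℝ := fun m => (-1) ^ m.choose 2 * fibonomial (n + 1) m
  have hc : c 0 = 1 := by simp [c, fibonomial]
  have hcd : mk c * mk (fun t => (-1) ^ t * fibonomial (n + t) t) = 1 := by
    simpa only [lucasProd, lucasSeries, goldenRatio_mul_goldenConj, ← fibonomial_eq_lucasnomial]
      using lucasProd_succ_mul_lucasSeries φ ψ n
  convert (det_toeplitzHessenberg hc hcd k).symm using 2
  ext i j
  simp only [toeplitzHessenberg, Matrix.of_apply, c]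
  split_ifs with h₁ h₂ h₃ h₃ <;> try omega
  · simp [h₁, fibonomial]
  · rw [show (i : ℕ) + 1 - j = (i - j) + 1 by omega, Nat.choose_two_right, Nat.add_sub_cancel]
  · rfl

theorem fibonomial_det_hessenberg_column (n k : ℕ) (hk : 1 ≤ k) :
    fibonomial (n + k) k =
      Matrix.det (Matrix.of fun i j : Fin k =>
        if (j : ℕ) = (i : ℕ) + 1 then (1 : ℝ)
        else if (j : ℕ) ≤ (i : ℕ) then
          (-1 : ℝ) ^ ((((i : ℕ) - (j : ℕ)) + 1) * ((i : ℕ) - (j : ℕ)) / 2) *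
            fibonomial (n + 1) (((i : ℕ) - (j : ℕ)) + 1)
        else 0) :=
  fibonomial_det_hessenberg_column_general n k
end

section
/- Continued fraction expansion for the Fibonomial row polynomial: fix an integer n ≥ 0. In the ring of formal power series ℝ⟦x⟧, define g_{n+1} = 1 + (F_{2n+1}/F_{n+1}) x and, for m = n, n−1, …, 1, define g_m = 1 + (F_{n+m}/F_m) x − (F_{n+m+1}/F_{m+1}) x · g_{m+1}^{−1} (each g_m has constant term 1, hence is invertible). Then for every integer 0 ≤ k ≤ n+1, the coefficient of x^k in the power series 1 − F_{n+1} x · g_1^{−1} equals (−1)^{k(k+1)/2} C(n+1, k)_F. -/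
/-- The tail `g_{n+1-i}` of the continued fraction: `cfTail n i = g_{n+1-i}` where
`g_{n+1} = 1 + (F_{2n+1}/F_{n+1}) x` and, for `1 ≤ m ≤ n`,
`g_m = 1 + (F_{n+m}/F_m) x − (F_{n+m+1}/F_{m+1}) x ⬝ g_{m+1}⁻¹`. -/
noncomputable def cfTail (n : ℕ) : ℕ → PowerSeries ℝ
  | 0 => 1 + PowerSeries.C ((Nat.fib (2 * n + 1) : ℝ) / (Nat.fib (n + 1) : ℝ)) *
      PowerSeries.X
  | (i + 1) =>
      1 + PowerSeries.C ((Nat.fib (n + (n - i)) : ℝ) / (Nat.fib (n - i) : ℝ)) *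
          PowerSeries.X
        - PowerSeries.C ((Nat.fib (n + (n - i) + 1) : ℝ) / (Nat.fib ((n - i) + 1) : ℝ)) *
          PowerSeries.X * (cfTail n i)⁻¹

/-!
Write `a_j = F_{n+j+1}/F_{j+1}` and `T_{m,d} = ∑_{k ≤ d} a_m ⋯ a_{m+k-1} x^k`. The recursion
`T_{m,d+1} = 1 + a_m x T_{m+1,d}` shows that every tail of the continued fraction is a quotient
`g_m = T_{m-1,n+2-m}/T_{m,n+1-m}`, hence `1 − F_{n+1} x / g_1 = 1 / T_{0,n+1}`.
Since `a_0 ⋯ a_{k-1} = C(n+k,k)_F`, the polynomial `T_{0,n+1}` agrees up to degree `n+1` with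
`∑_k C(n+k,k)_F x^k`. The inverse of that series is `∑_k (-1)^{k(k+1)/2} C(n+1,k)_F x^k`, the
golden-ratio analogue of `∏_{j ≤ n} (1 - q^j x)⁻¹ = ∑_k [n+k choose k]_q x^k`: passing from `n`
to `n + 1`, the row and the series both change by `x ↦ φ x` followed by multiplication, resp.
division, by `1 - ψ^n x`. This is the Pascal rule
`C(m+1,k+1)_F = φ^{k+1} C(m,k+1)_F + ψ^{m-k} C(m,k)_F`, which is Binet's formula in disguise.
-/

open Finset PowerSeries
open scoped goldenRatio

section

variable {R : Type*} [CommRing R]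

noncomputable def prodTrunc (a : ℕ → R) (m d : ℕ) : R⟦X⟧ :=
  mk fun k => if k ≤ d then ∏ r ∈ range k, a (m + r) else 0

lemma prodTrunc_zero (a : ℕ → R) (m : ℕ) : prodTrunc a m 0 = 1 := by
  ext (_ | k) <;> simp [prodTrunc, coeff_one]

lemma constantCoeff_prodTrunc (a : ℕ → R) (m d : ℕ) :
    constantCoeff (prodTrunc a m d) = 1 := by
  simp [prodTrunc]

lemma prodTrunc_succ (a : ℕ → R) (m d : ℕ) :
    prodTrunc a m (d + 1) = 1 + C (a m) * X * prodTrunc a (m + 1) d := by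
  ext (_ | k)
  · simp [prodTrunc]
  · rw [map_add, mul_assoc, coeff_C_mul, coeff_succ_X_mul, coeff_one, if_neg k.succ_ne_zero,
      zero_add]
    simp only [prodTrunc, coeff_mk, prod_range_succ', add_le_add_iff_right]
    split_ifs <;> simp [mul_comm, add_right_comm, add_assoc]

lemma coeff_succ_one_sub_C_mul_X_mul (c : R) (f : R⟦X⟧) (k : ℕ) :
    coeff (k + 1) ((1 - C c * X) * f) = coeff (k + 1) f - c * coeff k f := by
  rw [sub_mul, one_mul, mul_assoc, map_sub, coeff_C_mul, coeff_succ_X_mul]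

lemma coeff_zero_one_sub_C_mul_X_mul (c : R) (f : R⟦X⟧) :
    coeff 0 ((1 - C c * X) * f) = coeff 0 f := by
  simp [sub_mul, mul_assoc]

lemma dvd_sub_of_mul_eq_one {f g f' g' d : R} (h : f * g = 1) (h' : f' * g' = 1)
    (hd : d ∣ g' - g) : d ∣ f - f' := by
  have : f - f' = f * f' * (g' - g) := by linear_combination f' * h - f * h'
  exact this ▸ hd.mul_left _

end

section

variable {K : Type*} [Field K] (a : ℕ → K) {m d : ℕ} {g : K⟦X⟧}

lemma inv_mul_prodTrunc (hg : g * prodTrunc a (m + 1) d = prodTrunc a m (d + 1)) :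
    g⁻¹ * prodTrunc a m (d + 1) = prodTrunc a (m + 1) d := by
  have hg0 : constantCoeff g ≠ 0 := by
    have := congrArg constantCoeff hg
    simp only [map_mul, constantCoeff_prodTrunc, mul_one] at this
    simp [this]
  rw [← hg, ← mul_assoc, PowerSeries.inv_mul_cancel _ hg0, one_mul]

lemma one_sub_mul_inv_mul_prodTrunc (hg : g * prodTrunc a (m + 1) d = prodTrunc a m (d + 1)) :
    (1 - C (a m) * X * g⁻¹) * prodTrunc a m (d + 1) = 1 := by
  linear_combination (prodTrunc_succ a m d) - C (a m) * X * inv_mul_prodTrunc a hg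

lemma continuedFraction_step (hg : g * prodTrunc a (m + 1) d = prodTrunc a m (d + 1)) (b : K) :
    (1 + C b * X - C (a m) * X * g⁻¹) * prodTrunc a m (d + 1) =
      1 + C b * X * prodTrunc a m (d + 1) := by
  linear_combination one_sub_mul_inv_mul_prodTrunc a hg

end

lemma fibonomial_succ (n k : ℕ) :
    fibonomial n (k + 1) = fibonomial n k * (Nat.fib (n - k) / Nat.fib (k + 1)) :=
  prod_range_succ _ _

lemma fibonomial_of_lt {n k : ℕ} (h : n < k) : fibonomial n k = 0 :=
  prod_eq_zero (mem_range.mpr h) (by simp)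

lemma fibonomial_succ_succ_s10 (n k : ℕ) :
    fibonomial (n + 1) (k + 1) = fibonomial n k * Nat.fib (n + 1) / Nat.fib (k + 1) := by
  simp only [fibonomial, prod_div_distrib]
  rw [prod_range_succ' (fun r => (Nat.fib (n + 1 - r) : ℝ)),
    prod_range_succ (fun r => (Nat.fib (r + 1) : ℝ))]
  simp only [Nat.add_sub_add_right, Nat.sub_zero]
  ring

lemma fib_add_eq_goldenRatio (a b : ℕ) :
    (Nat.fib (a + b) : ℝ) = φ ^ b * Nat.fib a + ψ ^ a * Nat.fib b := by
  simp only [Real.coe_fib_eq]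
  rw [pow_add]
  ring

lemma fibonomial_pascal (n k : ℕ) :
    fibonomial (n + 1) (k + 1) =
      φ ^ (k + 1) * fibonomial n (k + 1) + ψ ^ (n - k) * fibonomial n k := by
  rcases le_or_gt k n with h | h
  · have hfib : (Nat.fib (n + 1) : ℝ) =
        φ ^ (k + 1) * Nat.fib (n - k) + ψ ^ (n - k) * Nat.fib (k + 1) := by
      rw [← fib_add_eq_goldenRatio, ← add_assoc, Nat.sub_add_cancel h]
    have hk : (Nat.fib (k + 1) : ℝ) ≠ 0 := by exact_mod_cast (Nat.fib_pos.mpr k.succ_pos).ne'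
    rw [fibonomial_succ_succ_s10, fibonomial_succ, hfib]
    field_simp
  · simp [fibonomial_of_lt, h, Nat.lt_succ_of_lt h]

lemma neg_one_pow_mul_goldenConj_pow_mul_fibonomial (n k : ℕ) :
    (-1) ^ k * ψ ^ (n - k) * fibonomial n k = ψ ^ n * φ ^ k * fibonomial n k := by
  rcases le_or_gt k n with h | h
  · obtain ⟨j, rfl⟩ := Nat.exists_eq_add_of_le h
    have hψφ : ψ ^ k * φ ^ k = (-1) ^ k := by rw [← mul_pow, Real.goldenConj_mul_goldenRatio]
    rw [Nat.add_sub_cancel_left]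
    linear_combination -(ψ ^ j * fibonomial (k + j) k) * hψφ
  · simp [fibonomial_of_lt h]

lemma neg_one_pow_triangle_succ (k : ℕ) :
    (-1 : ℝ) ^ ((k + 1) * (k + 1 + 1) / 2) = (-1) ^ (k * (k + 1) / 2) * (-1) ^ (k + 1) := by
  rw [← pow_add]
  congr 1
  have := Nat.triangle_succ (k + 1)
  simp only [Nat.add_sub_cancel] at this
  rw [mul_comm, this, mul_comm]

noncomputable def signedFibonomialRow (n : ℕ) : ℝ⟦X⟧ :=
  mk fun k => (-1) ^ (k * (k + 1) / 2) * fibonomial n k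

/-- For `n = 0` this is `1`: truncated subtraction gives `C(k-1,k)_F = 0` for `k ≥ 1`. -/
noncomputable def fibonomialSeries (n : ℕ) : ℝ⟦X⟧ :=
  mk fun k => fibonomial (n + k - 1) k

lemma signedFibonomialRow_zero : signedFibonomialRow 0 = 1 := by
  ext (_ | k)
  · simp [signedFibonomialRow, fibonomial]
  · simp [signedFibonomialRow, fibonomial_of_lt]

lemma fibonomialSeries_zero : fibonomialSeries 0 = 1 := by
  ext (_ | k)
  · simp [fibonomialSeries, fibonomial]
  · simp [fibonomialSeries, fibonomial_of_lt]

lemma signedFibonomialRow_succ (n : ℕ) :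
    signedFibonomialRow (n + 1) = (1 - C (ψ ^ n) * X) * rescale φ (signedFibonomialRow n) := by
  ext (_ | k)
  · rw [coeff_zero_one_sub_C_mul_X_mul]
    simp [signedFibonomialRow, fibonomial]
  · rw [coeff_succ_one_sub_C_mul_X_mul]
    simp only [signedFibonomialRow, coeff_rescale, coeff_mk]
    rw [fibonomial_pascal, neg_one_pow_triangle_succ]
    linear_combination -(-1) ^ (k * (k + 1) / 2) * neg_one_pow_mul_goldenConj_pow_mul_fibonomial n k

lemma fibonomialSeries_succ (n : ℕ) :
    (1 - C (ψ ^ n) * X) * fibonomialSeries (n + 1) = rescale φ (fibonomialSeries n) := by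
  ext (_ | k)
  · rw [coeff_zero_one_sub_C_mul_X_mul]
    simp [fibonomialSeries, fibonomial]
  · rw [coeff_succ_one_sub_C_mul_X_mul]
    simp only [fibonomialSeries, coeff_rescale, coeff_mk]
    have := fibonomial_pascal (n + k) k
    rw [Nat.add_sub_cancel] at this
    rw [show n + 1 + (k + 1) - 1 = n + k + 1 by omega, show n + 1 + k - 1 = n + k by omega,
      show n + (k + 1) - 1 = n + k by omega, this]
    ring

lemma signedFibonomialRow_mul_fibonomialSeries (n : ℕ) :
    signedFibonomialRow n * fibonomialSeries n = 1 := by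
  induction n with
  | zero => rw [signedFibonomialRow_zero, fibonomialSeries_zero, one_mul]
  | succ n ih =>
    rw [signedFibonomialRow_succ, mul_comm (1 - _), mul_assoc, fibonomialSeries_succ, ← map_mul,
      ih, map_one]

noncomputable def fibRatio (n j : ℕ) : ℝ := Nat.fib (n + j + 1) / Nat.fib (j + 1)

lemma prod_fibRatio (n k : ℕ) : ∏ r ∈ range k, fibRatio n r = fibonomial (n + k) k := by
  simp only [fibRatio, fibonomial, prod_div_distrib]
  rw [← prod_range_reflect (fun r => (Nat.fib (n + k - r) : ℝ))]
  congr 1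
  refine prod_congr rfl fun r hr => ?_
  rw [show n + k - (k - 1 - r) = n + r + 1 by have := mem_range.mp hr; omega]

lemma X_pow_dvd_fibonomialSeries_sub_prodTrunc (n : ℕ) :
    X ^ (n + 2) ∣ fibonomialSeries (n + 1) - prodTrunc (fibRatio n) 0 (n + 1) := by
  refine X_pow_dvd_iff.mpr fun k hk => ?_
  simp only [map_sub, fibonomialSeries, prodTrunc, coeff_mk, zero_add, prod_fibRatio,
    if_pos (Nat.le_of_lt_succ hk)]
  rw [show n + 1 + k - 1 = n + k by omega, sub_self]

lemma cfTail_mul_prodTrunc (n : ℕ) : ∀ i ≤ n,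
    cfTail n i * prodTrunc (fibRatio n) (n - i + 1) i = prodTrunc (fibRatio n) (n - i) (i + 1)
  | 0, _ => by
    rw [cfTail, prodTrunc_zero, mul_one, prodTrunc_succ, prodTrunc_zero, mul_one, Nat.sub_zero,
      fibRatio, two_mul]
  | i + 1, hi => by
    obtain ⟨m, hm⟩ : ∃ m, n - i = m + 1 := ⟨n - i - 1, by omega⟩
    have ih := cfTail_mul_prodTrunc n i (by omega)
    rw [hm] at ih
    have hcf : cfTail n (i + 1) =
        1 + C (fibRatio n m) * X - C (fibRatio n (m + 1)) * X * (cfTail n i)⁻¹ := by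
      rw [cfTail, hm]
      rfl
    rw [hcf, show n - (i + 1) = m by omega, continuedFraction_step _ ih, ← prodTrunc_succ]

/-- `cfTail n n = g_1`; the coefficients of `1 − F_{n+1} x ⬝ g_1⁻¹` up to degree `n+1`
are the signed Fibonomial coefficients. -/
theorem fibonomial_continued_fraction_row (n k : ℕ) (hk : k ≤ n + 1) :
    PowerSeries.coeff k
        (1 - PowerSeries.C (Nat.fib (n + 1) : ℝ) * PowerSeries.X * (cfTail n n)⁻¹) =
      (-1 : ℝ) ^ (k * (k + 1) / 2) * fibonomial (n + 1) k := by
  have hg := cfTail_mul_prodTrunc n n le_rfl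
  rw [Nat.sub_self] at hg
  have hinv := one_sub_mul_inv_mul_prodTrunc (fibRatio n) hg
  simp only [fibRatio, add_zero, zero_add, Nat.fib_one, Nat.cast_one, div_one] at hinv
  have hdvd := dvd_sub_of_mul_eq_one hinv (signedFibonomialRow_mul_fibonomialSeries (n + 1))
    (X_pow_dvd_fibonomialSeries_sub_prodTrunc n)
  have hcoeff := X_pow_dvd_iff.mp hdvd k (by omega)
  rwa [map_sub, sub_eq_zero, signedFibonomialRow, coeff_mk] at hcoeff
end
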